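/- arXiv:2411.17909 — 2 statements merged into one kernel-verified Lean document; each statement's English description precedes it below -/
import Mathlib

section
/- Let I ⊆ (0,1] be a set of real numbers containing 1. Let I₊ denote the union of {0} with the set of all finite sums of elements of I (with repetitions allowed), and let D(I) = { (m − 1 + f)/m : m a positive integer, f ∈ I₊ with f ≤ 1 }. Then I satisfies the descending chain condition if and only if D(I) satisfies the descending chain condition. -/
/-- A set `S` of real numbers satisfies the descending chain condition (DCC) if every
non-increasing sequence of elements of `S` is eventually constant. -/
def IsDCCSet (S : Set ℝ) : Prop :=
  ∀ f : ℕ → ℝ, (∀ n, f n ∈ S) → Antitone f → ∃ N, ∀ n, N ≤ n → f n = f N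

/-- `I₊`: the union of `{0}` with the set of all finite sums of elements of `I`
(with repetitions allowed); sums of lists of elements of `I` (the empty list gives `0`). -/
def sumSet (I : Set ℝ) : Set ℝ :=
  {x : ℝ | ∃ l : List ℝ, (∀ a ∈ l, a ∈ I) ∧ l.sum = x}

/-- `D(I) = { (m − 1 + f)/m : m a positive integer, f ∈ I₊ with f ≤ 1 }`. -/
def DSet (I : Set ℝ) : Set ℝ :=
  {a : ℝ | ∃ m : ℕ, 0 < m ∧ ∃ f ∈ sumSet I, f ≤ 1 ∧ a = ((m : ℝ) - 1 + f) / (m : ℝ)}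

/-!
`I ⊆ D(I)` (take `m = 1`), so one direction is immediate. Conversely, `I₊` is the additive
submonoid generated by `I`, which is well ordered by Higman's lemma since `I` is well ordered and
positive. Writing `(m - 1 + f) / m = 1 - (1 - f) / m`, an element of `D(I)` that is at most
`c < 1` has `m ≤ 1 / (1 - c)`, so below `c` the set `D(I)` is a finite union of monotone images
of `I₊`; and a descending chain in `D(I) ⊆ (-∞, 1]` lies below such a `c` after its first term.
-/

open Set

lemma isDCCSet_iff_isWF (S : Set ℝ) : IsDCCSet S ↔ S.IsWF := by
  constructor
  · intro h
    rw [isWF_iff_no_descending_seq]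
    intro f hf hmem
    obtain ⟨N, hN⟩ := h f hmem hf.antitone
    exact (hf N.lt_succ_self).ne (hN (N + 1) N.le_succ)
  · intro h f hmem hf
    have hne : (range f).Nonempty := range_nonempty f
    have hwf : (range f).IsWF := h.mono (range_subset_iff.2 hmem)
    obtain ⟨N, hN⟩ := hwf.min_mem hne
    refine ⟨N, fun n hn => le_antisymm (hf hn) ?_⟩
    rw [hN]
    exact hwf.min_le hne (mem_range_self n)

lemma isWF_of_forall_lt_isWF_inter_Iic {α : Type*} [Preorder α] {S : Set α} {u : α}
    (hS : S ⊆ Iic u) (h : ∀ c < u, (S ∩ Iic c).IsWF) : S.IsWF := by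
  rw [isWF_iff_no_descending_seq]
  intro f hf hmem
  have hc : f 1 < u := (hf zero_lt_one).trans_le (hS (hmem 0))
  refine (isWF_iff_no_descending_seq.1 (h _ hc)) (fun n => f (n + 1))
    (hf.comp_strictMono (strictMono_id.add_const 1)) fun n => ⟨hmem _, ?_⟩
  exact hf.antitone (Nat.le_add_left 1 n)

lemma sumSet_eq_addSubmonoidClosure (I : Set ℝ) : sumSet I = AddSubmonoid.closure I := by
  rw [AddSubmonoid.closure_eq_image_sum]
  rfl

lemma nonneg_of_mem_sumSet {I : Set ℝ} (hpos : ∀ x ∈ I, 0 ≤ x) {f : ℝ} (hf : f ∈ sumSet I) :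
    0 ≤ f := by
  obtain ⟨l, hl, rfl⟩ := hf
  exact List.sum_nonneg fun x hx => hpos x (hl x hx)

lemma Set.IsWF.sumSet {I : Set ℝ} (hI : I.IsWF) (hpos : ∀ x ∈ I, 0 ≤ x) : (sumSet I).IsWF := by
  rw [sumSet_eq_addSubmonoidClosure]
  exact (hI.isPWO.addSubmonoid_closure hpos).isWF

lemma subset_DSet {I : Set ℝ} (hI : I ⊆ Iic 1) : I ⊆ DSet I :=
  fun a ha => ⟨1, one_pos, a, ⟨[a], by simpa using ha, List.sum_singleton⟩, hI ha, by simp⟩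

lemma natCast_le_floor_of_div_le {m : ℕ} {f c : ℝ} (hm : 0 < m) (hf : 0 ≤ f) (hc : c < 1)
    (h : ((m : ℝ) - 1 + f) / m ≤ c) : m ≤ ⌊(1 - c)⁻¹⌋₊ := by
  have hm' : (0 : ℝ) < m := Nat.cast_pos.2 hm
  rw [div_le_iff₀ hm'] at h
  apply Nat.le_floor
  rw [le_inv_comm₀ hm' (sub_pos.2 hc), inv_eq_one_div, le_div_iff₀ hm']
  linarith

lemma DSet_subset_Iic_one (I : Set ℝ) : DSet I ⊆ Iic 1 := by
  rintro _ ⟨m, hm, f, -, hf1, rfl⟩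
  have hm' : (0 : ℝ) < m := Nat.cast_pos.2 hm
  rw [mem_Iic, div_le_one hm']
  linarith

lemma DSet_inter_Iic_subset {I : Set ℝ} (hpos : ∀ x ∈ I, 0 ≤ x) {c : ℝ} (hc : c < 1) :
    DSet I ∩ Iic c ⊆
      ⋃ m ∈ Finset.Icc 1 ⌊(1 - c)⁻¹⌋₊, (fun f => ((m : ℝ) - 1 + f) / m) '' sumSet I := by
  rintro _ ⟨⟨m, hm, f, hf, -, rfl⟩, hfc⟩
  have hmc := natCast_le_floor_of_div_le hm (nonneg_of_mem_sumSet hpos hf) hc hfc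
  exact mem_biUnion (Finset.mem_Icc.2 ⟨hm, hmc⟩) ⟨f, hf, rfl⟩

lemma Set.IsWF.DSet {I : Set ℝ} (hI : I.IsWF) (hpos : ∀ x ∈ I, 0 ≤ x) : (DSet I).IsWF := by
  refine isWF_of_forall_lt_isWF_inter_Iic (DSet_subset_Iic_one I) fun c hc => ?_
  refine IsWF.mono ?_ (DSet_inter_Iic_subset hpos hc)
  refine (Finset.isWF_bUnion _).2 fun m _ => ?_
  have hmono : Monotone fun f : ℝ => ((m : ℝ) - 1 + f) / m := fun _ _ h =>
    div_le_div_of_nonneg_right (by linarith) m.cast_nonneg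
  exact ((hI.sumSet hpos).isPWO.image_of_monotone hmono).isWF

theorem dcc_iff_dcc_DSet_general (I : Set ℝ) (hI : I ⊆ Set.Ioc (0 : ℝ) 1) :
    IsDCCSet I ↔ IsDCCSet (DSet I) := by
  rw [isDCCSet_iff_isWF, isDCCSet_iff_isWF]
  exact ⟨fun h => h.DSet fun x hx => (hI hx).1.le,
    fun h => h.mono (subset_DSet fun x hx => (hI hx).2)⟩

theorem dcc_iff_dcc_DSet (I : Set ℝ) (hI : I ⊆ Set.Ioc (0 : ℝ) 1) (h1 : (1 : ℝ) ∈ I) :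
    IsDCCSet I ↔ IsDCCSet (DSet I) :=
  dcc_iff_dcc_DSet_general I hI
end

section
/- Let R be a discrete valuation ring with fraction field K, let π be a uniformizer of R, and let N be a positive integer. Then the polynomial X^N − π is irreducible over K, L := K[X]/(X^N − π) is a field extension of K of degree N, and the ring R' := R[X]/(X^N − π) is a discrete valuation ring whose maximal ideal is generated by the image t of X and whose residue field equals the residue field of R; moreover R' is the integral closure of R in L. -/
/-!
`X^N - π` is Eisenstein at the maximal ideal of `R`, hence irreducible over `R` and, by Gauss's
lemma, over `K`. Reducing modulo `𝔪_R` and sending the root `t` to `0` identifies `R'/(t)` with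
the residue field of `R`, so `(t)` is maximal; as `R'` is finite over `R`, every maximal ideal of
`R'` contains `π = t^N`, hence `t`. So `R'` is a Noetherian local domain whose maximal ideal is
principal and nonzero, i.e. a DVR. Clearing the denominators of coefficients in `K` shows that
`L` is the fraction field of `R'`, and a DVR is integrally closed, so `R'` is the integral closure
of `R` in `L`.
-/

open Polynomial IsLocalRing

theorem Polynomial.isEisensteinAt_X_pow_sub_C {R : Type*} [CommRing R] [Nontrivial R]
    {𝓟 : Ideal R} (h𝓟 : 𝓟 ≠ ⊤) {π : R} (hπ : π ∈ 𝓟) (hπ2 : π ∉ 𝓟 ^ 2) {n : ℕ} (hn : n ≠ 0) :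
    (X ^ n - C π).IsEisensteinAt 𝓟 where
  leading := by
    rwa [(monic_X_pow_sub_C π hn).leadingCoeff, ← Ideal.ne_top_iff_one]
  mem {k} hk := by
    rw [natDegree_X_pow_sub_C] at hk
    rw [coeff_sub, coeff_X_pow, if_neg hk.ne, coeff_C, zero_sub, neg_mem_iff]
    split_ifs
    exacts [hπ, 𝓟.zero_mem]
  notMem := by
    rwa [coeff_sub, coeff_X_pow, if_neg hn.symm, coeff_C_zero, zero_sub, neg_mem_iff]

section Prime

variable {R : Type*} [CommRing R] [IsDomain R] {π : R} (hπ : Prime π) {n : ℕ} (hn : n ≠ 0)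
include hπ hn

theorem Prime.irreducible_X_pow_sub_C : Irreducible (X ^ n - C π) := by
  have hπ2 : π ∉ Ideal.span {π} ^ 2 := by
    rw [Ideal.span_singleton_pow, Ideal.mem_span_singleton, ← pow_one π, ← pow_mul, one_mul,
      pow_dvd_pow_iff hπ.ne_zero hπ.not_isUnit]
    omega
  refine (isEisensteinAt_X_pow_sub_C ?_ (Ideal.mem_span_singleton_self π) hπ2 hn).irreducible
    ((Ideal.span_singleton_prime hπ.ne_zero).mpr hπ) (monic_X_pow_sub_C π hn).isPrimitive
    (by rwa [natDegree_X_pow_sub_C, pos_iff_ne_zero])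
  rw [Ne, Ideal.span_singleton_eq_top]
  exact hπ.not_isUnit

theorem Prime.irreducible_X_pow_sub_C_algebraMap {K : Type*} [IsIntegrallyClosed R] [Field K]
    [Algebra R K] [IsFractionRing R K] : Irreducible (X ^ n - C (algebraMap R K π)) := by
  simpa using ((monic_X_pow_sub_C π hn).irreducible_iff_irreducible_map_fraction_map (K := K)).mp
    (hπ.irreducible_X_pow_sub_C hn)

end Prime

theorem Ideal.IsMaximal.comap_eq_maximalIdeal {A B : Type*} [CommRing A] [IsLocalRing A]
    [CommRing B] [Algebra A B] [Algebra.IsIntegral A B] {I : Ideal B} (hI : I.IsMaximal) :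
    I.comap (algebraMap A B) = maximalIdeal A :=
  eq_maximalIdeal (Ideal.isMaximal_comap_of_isIntegral_of_isMaximal I)

theorem RingHom.range_eq_integralClosure {R A L : Type*} [CommRing R] [CommRing A] [IsDomain A]
    [IsIntegrallyClosed A] [Field L] [Algebra R A] [Algebra R L] [Algebra.IsIntegral R A]
    (φ : A →+* L) (hφ : φ.comp (algebraMap R A) = algebraMap R L) (hinj : Function.Injective φ)
    (hden : ∀ z, ∃ x y, z = φ x / φ y) :
    φ.range = (integralClosure R L).toSubring := by
  let := φ.toAlgebra
  have : IsScalarTower R A L := .of_algebraMap_eq fun r => (RingHom.congr_fun hφ r).symm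
  have : FaithfulSMul A L := (faithfulSMul_iff_algebraMap_injective A L).mpr hinj
  have : IsFractionRing A L := .of_field A L hden
  have : IsIntegralClosure A R L := .of_isIntegrallyClosed A R L
  ext z
  exact (IsIntegralClosure.isIntegral_iff (A := A)).symm

namespace AdjoinRoot

section Map

variable {R S : Type*} [CommRing R] [CommRing S]

theorem map_mk (f : R →+* S) (p : R[X]) (q : S[X]) (h : q ∣ p.map f) (g : R[X]) :
    map f p q h (mk p g) = mk q (g.map f) := by
  rw [map, lift_mk, ← eval₂_map, ← algebraMap_eq, ← aeval_def, aeval_eq]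

theorem map_injective {f : R →+* S} (hf : Function.Injective f) {p : R[X]} (hp : p.Monic)
    {q : S[X]} (hq : p.map f = q) : Function.Injective (map f p q (dvd_of_eq hq.symm)) := by
  refine (injective_iff_map_eq_zero _).mpr fun x hx => ?_
  obtain ⟨g, rfl⟩ := mk_surjective x
  rw [map_mk, mk_eq_zero, ← hq, map_dvd_map f hf hp] at hx
  exact mk_eq_zero.mpr hx

theorem exists_eq_map_div_map [Nontrivial R] {K : Type*} [Field K] [Algebra R K]
    [IsFractionRing R K] {p : R[X]} {q : K[X]} [Fact (Irreducible q)]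
    (hq : p.map (algebraMap R K) = q) (z : AdjoinRoot q) :
    ∃ x y, z = map (algebraMap R K) p q (dvd_of_eq hq.symm) x /
      map (algebraMap R K) p q (dvd_of_eq hq.symm) y := by
  obtain ⟨g, rfl⟩ := mk_surjective z
  obtain ⟨b, hb, hg⟩ := IsLocalization.integerNormalization_spec (nonZeroDivisors R) g
  refine ⟨mk p (IsLocalization.integerNormalization (nonZeroDivisors R) g), of p b, ?_⟩
  have hb0 : of q (algebraMap R K b) ≠ 0 :=
    (_root_.map_ne_zero _).mpr (IsFractionRing.to_map_ne_zero_of_mem_nonZeroDivisors hb)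
  rw [map_mk, hg, map_of, eq_div_iff hb0, Algebra.smul_def, map_mul, mul_comm]
  rfl

end Map

section XPowSubC

variable {R : Type*} [CommRing R] {π : R} {n : ℕ}

theorem root_X_pow_sub_C_pow : root (X ^ n - C π) ^ n = of _ π := by
  rw [← sub_eq_zero, ← eval₂_root, eval₂_sub, eval₂_C, eval₂_pow, eval₂_X]

instance [NeZero n] : Algebra.IsIntegral R (AdjoinRoot (X ^ n - C π)) :=
  have := (monic_X_pow_sub_C π (NeZero.ne n)).finite_adjoinRoot
  Algebra.IsIntegral.of_finite _ _

theorem root_X_pow_sub_C_ne_zero [IsDomain R] (hπ : π ≠ 0) (hn : n ≠ 0) :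
    root (X ^ n - C π) ≠ 0 := by
  intro h
  have := root_X_pow_sub_C_pow (n := n) (π := π)
  rw [h, zero_pow hn, eq_comm, map_eq_zero_iff _ (of.injective_of_degree_ne_zero ?_)] at this
  · exact hπ this
  · rw [degree_X_pow_sub_C (Nat.pos_of_ne_zero hn)]
    exact_mod_cast hn

variable [IsDomain R] [hπ : Fact (Irreducible π)] [hn : NeZero n]

instance [UniqueFactorizationMonoid R] : IsDomain (AdjoinRoot (X ^ n - C π)) :=
  isDomain_of_prime (hπ.out.prime.irreducible_X_pow_sub_C hn.out).prime

variable [IsDiscreteValuationRing R]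

theorem eval₂_residue_X_pow_sub_C_zero : (X ^ n - C π).eval₂ (residue R) 0 = 0 := by
  rw [eval₂_at_zero, coeff_sub, coeff_X_pow, if_neg hn.out.symm, coeff_C_zero, zero_sub, map_neg,
    neg_eq_zero, residue_eq_zero_iff, hπ.out.maximalIdeal_eq]
  exact Ideal.mem_span_singleton_self π

variable (π n) in
noncomputable def toResidueField : AdjoinRoot (X ^ n - C π) →+* ResidueField R :=
  lift (residue R) 0 eval₂_residue_X_pow_sub_C_zero

theorem toResidueField_of (r : R) : toResidueField π n (of _ r) = residue R r := lift_of _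

theorem toResidueField_surjective : Function.Surjective (toResidueField π n) := fun y => by
  obtain ⟨r, rfl⟩ := residue_surjective y
  exact ⟨of _ r, toResidueField_of r⟩

theorem ker_toResidueField :
    RingHom.ker (toResidueField π n) = Ideal.span {root (X ^ n - C π)} := by
  refine le_antisymm (fun x hx => ?_) ?_
  · obtain ⟨p, rfl⟩ := mk_surjective x
    rw [RingHom.mem_ker, toResidueField, lift_mk, eval₂_at_zero, residue_eq_zero_iff,
      hπ.out.maximalIdeal_eq, Ideal.mem_span_singleton] at hx
    obtain ⟨c, hc⟩ := hx
    have hp : mk _ p = root (X ^ n - C π) * mk _ p.divX + root _ ^ n * of _ c := by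
      rw [root_X_pow_sub_C_pow, ← map_mul, ← hc, ← mk_X, ← mk_C, ← map_mul, ← map_add,
        X_mul_divX_add]
    rw [hp]
    exact Ideal.add_mem _ (Ideal.mul_mem_right _ _ (Ideal.mem_span_singleton_self _))
      (Ideal.mul_mem_right _ _ (Ideal.mem_span_singleton.mpr (dvd_pow_self _ hn.out)))
  · rw [Ideal.span_le, Set.singleton_subset_iff]
    exact lift_root _

theorem isMaximal_span_root : (Ideal.span {root (X ^ n - C π)}).IsMaximal :=
  ker_toResidueField (π := π) (n := n) ▸
    RingHom.ker_isMaximal_of_surjective _ toResidueField_surjective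

theorem span_root_le_of_isMaximal {I : Ideal (AdjoinRoot (X ^ n - C π))} (hI : I.IsMaximal) :
    Ideal.span {root (X ^ n - C π)} ≤ I := by
  have hπI : of _ π ∈ I := by
    change π ∈ I.comap (algebraMap R _)
    rw [hI.comap_eq_maximalIdeal, hπ.out.maximalIdeal_eq]
    exact Ideal.mem_span_singleton_self π
  rw [Ideal.span_le, Set.singleton_subset_iff]
  refine hI.isPrime.mem_of_pow_mem n ?_
  rwa [root_X_pow_sub_C_pow]

instance : IsLocalRing (AdjoinRoot (X ^ n - C π)) :=
  .of_unique_max_ideal ⟨_, isMaximal_span_root, fun _ hI =>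
    (isMaximal_span_root.eq_of_le hI.ne_top (span_root_le_of_isMaximal hI)).symm⟩

theorem maximalIdeal_eq : maximalIdeal (AdjoinRoot (X ^ n - C π)) = Ideal.span {root _} :=
  (eq_maximalIdeal isMaximal_span_root).symm

instance : IsDiscreteValuationRing (AdjoinRoot (X ^ n - C π)) := by
  have hnf : ¬ IsField (AdjoinRoot (X ^ n - C π)) := by
    rw [isField_iff_maximalIdeal_eq, maximalIdeal_eq, Ideal.span_singleton_eq_bot]
    exact root_X_pow_sub_C_ne_zero hπ.out.ne_zero hn.out
  refine ((IsDiscreteValuationRing.TFAE _ hnf).out 0 4).mpr ?_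
  rw [maximalIdeal_eq]
  exact ⟨_, rfl⟩

theorem residue_algebraMap_eq_zero_iff (r : R) :
    residue _ (algebraMap R (AdjoinRoot (X ^ n - C π)) r) = 0 ↔ r ∈ maximalIdeal R := by
  rw [residue_eq_zero_iff, maximalIdeal_eq, ← ker_toResidueField, RingHom.mem_ker, algebraMap_eq,
    toResidueField_of, residue_eq_zero_iff]

theorem residue_comp_algebraMap_surjective :
    Function.Surjective ((residue (AdjoinRoot (X ^ n - C π))).comp (algebraMap R _)) := by
  intro y
  obtain ⟨x, rfl⟩ := residue_surjective y
  obtain ⟨r, hr⟩ := residue_surjective (toResidueField π n x)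
  refine ⟨r, Ideal.Quotient.eq.mpr ?_⟩
  rw [maximalIdeal_eq, ← ker_toResidueField, RingHom.mem_ker, map_sub, algebraMap_eq,
    toResidueField_of, hr, sub_self]

end XPowSubC

end AdjoinRoot

/-- Let `R` be a discrete valuation ring with fraction field `K`, `π` a uniformizer of `R`,
and `N` a positive integer. Then `X^N − π` is irreducible over `K`, `L := K[X]/(X^N − π)` is a
field extension of `K` of degree `N`, and `R' := R[X]/(X^N − π)` is a discrete valuation ring
whose maximal ideal is generated by the image `t` of `X` and whose residue field equals the
residue field of `R`; moreover `R'` is the integral closure of `R` in `L`. -/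
theorem adjoinRoot_of_uniformizer_is_dvr
    (R : Type*) [CommRing R] [IsDomain R] [IsDiscreteValuationRing R]
    (π : R) (hπ : IsLocalRing.maximalIdeal R = Ideal.span {π})
    (N : ℕ) (hN : 0 < N) :
    Irreducible
      (Polynomial.X ^ N - Polynomial.C (algebraMap R (FractionRing R) π) :
        Polynomial (FractionRing R)) ∧
    IsField (AdjoinRoot
      (Polynomial.X ^ N - Polynomial.C (algebraMap R (FractionRing R) π))) ∧
    Module.finrank (FractionRing R)
      (AdjoinRoot (Polynomial.X ^ N - Polynomial.C (algebraMap R (FractionRing R) π))) = N ∧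
    ∃ (hdom : IsDomain (AdjoinRoot (Polynomial.X ^ N - Polynomial.C π)))
      (hloc : IsLocalRing (AdjoinRoot (Polynomial.X ^ N - Polynomial.C π))),
      (@IsDiscreteValuationRing (AdjoinRoot (Polynomial.X ^ N - Polynomial.C π)) _ hdom) ∧
      (@IsLocalRing.maximalIdeal (AdjoinRoot (Polynomial.X ^ N - Polynomial.C π)) _ hloc =
        Ideal.span {AdjoinRoot.root (Polynomial.X ^ N - Polynomial.C π)}) ∧
      Function.Surjective
        ((@IsLocalRing.residue (AdjoinRoot (Polynomial.X ^ N - Polynomial.C π)) _ hloc).comp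
          (algebraMap R (AdjoinRoot (Polynomial.X ^ N - Polynomial.C π)))) ∧
      (∀ r : R,
        (@IsLocalRing.residue (AdjoinRoot (Polynomial.X ^ N - Polynomial.C π)) _ hloc).comp
            (algebraMap R (AdjoinRoot (Polynomial.X ^ N - Polynomial.C π))) r = 0 ↔
          r ∈ IsLocalRing.maximalIdeal R) ∧
      ∃ f : AdjoinRoot (Polynomial.X ^ N - Polynomial.C π) →+*
          AdjoinRoot
            (Polynomial.X ^ N - Polynomial.C (algebraMap R (FractionRing R) π) :
              Polynomial (FractionRing R)),
        f (AdjoinRoot.root (Polynomial.X ^ N - Polynomial.C π)) =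
          AdjoinRoot.root
            (Polynomial.X ^ N - Polynomial.C (algebraMap R (FractionRing R) π)) ∧
        (∀ r : R,
          f (algebraMap R (AdjoinRoot (Polynomial.X ^ N - Polynomial.C π)) r) =
            algebraMap R
              (AdjoinRoot
                (Polynomial.X ^ N - Polynomial.C (algebraMap R (FractionRing R) π) :
                  Polynomial (FractionRing R))) r) ∧
        f.range =
          (integralClosure R
            (AdjoinRoot
              (Polynomial.X ^ N - Polynomial.C (algebraMap R (FractionRing R) π) :
                Polynomial (FractionRing R)))).toSubring := by
  have hπ' : Irreducible π := (IsDiscreteValuationRing.irreducible_iff_uniformizer π).mpr hπ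
  have : Fact (Irreducible π) := ⟨hπ'⟩
  have : NeZero N := ⟨hN.ne'⟩
  have hirr : Irreducible (X ^ N - C (algebraMap R (FractionRing R) π)) :=
    hπ'.prime.irreducible_X_pow_sub_C_algebraMap hN.ne'
  have : Fact (Irreducible (X ^ N - C (algebraMap R (FractionRing R) π))) := ⟨hirr⟩
  have hq : (X ^ N - C π).map (algebraMap R (FractionRing R)) =
      X ^ N - C (algebraMap R (FractionRing R) π) := by simp
  let f := AdjoinRoot.map _ _ _ (dvd_of_eq hq.symm)
  have hf : f.comp (algebraMap R _) = algebraMap R _ := by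
    ext r
    simp [f, AdjoinRoot.algebraMap_eq, AdjoinRoot.algebraMap_eq']
  refine ⟨hirr, Field.toIsField _,
    (AdjoinRoot.isAdjoinRootMonic _ (monic_X_pow_sub_C _ hN.ne')).finrank.trans
      natDegree_X_pow_sub_C, inferInstance, inferInstance, inferInstance,
    AdjoinRoot.maximalIdeal_eq, AdjoinRoot.residue_comp_algebraMap_surjective,
    AdjoinRoot.residue_algebraMap_eq_zero_iff, f, AdjoinRoot.map_root .., RingHom.congr_fun hf,
    f.range_eq_integralClosure hf
      (AdjoinRoot.map_injective (IsFractionRing.injective _ _) (monic_X_pow_sub_C _ hN.ne') hq)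
      (AdjoinRoot.exists_eq_map_div_map hq)⟩
end
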